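/- arXiv:1804.08791 — 4 statements merged into one kernel-verified Lean document; each statement's English description precedes it below -/
import Mathlib

section
/- For every ε > 0 there exists an instance of splittable Capacitated Vehicle Routing on a tree with LB > 0 such that every feasible solution has cost at least (4/3 − ε)·LB; that is, the ratio OPT/LB can be made arbitrarily close to 4/3. -/
open scoped Classical

/-- An instance of splittable Capacitated Vehicle Routing on a (finite) tree.
The tree is rooted at the depot `root` and represented by a parent function:
every vertex reaches the root by iterating `parent`.  For `v ≠ root`, `len v`
is the length of the edge from `parent v` to `v`. -/
structure TreeCVRP (V : Type) [Fintype V] where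
  root : V
  parent : V → V
  parent_root : parent root = root
  reaches_root : ∀ v : V, ∃ n : ℕ, parent^[n] v = root
  len : V → ℝ
  len_nonneg : ∀ v, 0 ≤ len v
  demand : V → ℝ
  demand_nonneg : ∀ v, 0 ≤ demand v
  demand_root : demand root = 0
  cap : ℝ
  cap_pos : 0 < cap

namespace TreeCVRP

variable {V : Type} [Fintype V]

/-- `I.inSubtree w v` means that `v` lies in the subtree `T_w` rooted at `w`
(equivalently, `w` is an ancestor of `v`). -/
def inSubtree (I : TreeCVRP V) (w v : V) : Prop := ∃ n : ℕ, I.parent^[n] v = w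

/-- `d(T_w)`: the total demand of the subtree rooted at `w`. -/
noncomputable def subtreeDemand (I : TreeCVRP V) (w : V) : ℝ :=
  ∑ v ∈ Finset.univ.filter (fun v => I.inSubtree w v), I.demand v

/-- The traffic lower bound `LB = Σ_{e=(u,v)} 2·l(e)·⌈d(T_v)/Q⌉`, where the sum
is over edges, each identified with its lower endpoint `v ≠ root`. -/
noncomputable def lowerBound (I : TreeCVRP V) : ℝ :=
  ∑ v ∈ Finset.univ.filter (fun v => v ≠ I.root),
    2 * I.len v * (⌈I.subtreeDemand v / I.cap⌉ : ℝ)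

/-- A tour: a closed walk in the tree starting and ending at the depot, together
with an assignment of covered demand.  The walk is recorded by the number of
times `crossings v` it traverses the edge from `parent v` to `v` (in either
direction); a closed walk crosses each tree edge an even number of times, and the
set of crossed edges is connected to the root.  Demand may be covered only at
visited vertices, and a tour covers at most `Q` total demand. -/
structure Tour (I : TreeCVRP V) where
  crossings : V → ℕ
  crossings_root : crossings I.root = 0
  crossings_even : ∀ v, Even (crossings v)
  crossings_connected : ∀ v, 0 < crossings v →
    I.parent v = I.root ∨ 0 < crossings (I.parent v)
  cover : V → ℝ
  cover_nonneg : ∀ v, 0 ≤ cover v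
  cover_visited : ∀ v, 0 < cover v → v = I.root ∨ 0 < crossings v
  cover_le_cap : ∑ v, cover v ≤ I.cap

/-- The cost of a tour: lengths of traversed edges, counted with multiplicity. -/
noncomputable def Tour.cost {I : TreeCVRP V} (t : I.Tour) : ℝ :=
  ∑ v, (t.crossings v : ℝ) * I.len v

/-- A feasible solution: a finite collection of tours whose covered amounts at
each vertex sum to the demand at that vertex. -/
structure Solution (I : TreeCVRP V) where
  tours : List I.Tour
  covers_demand : ∀ v, (tours.map (fun t => t.cover v)).sum = I.demand v

/-- The total cost of a solution. -/
noncomputable def Solution.cost {I : TreeCVRP V} (s : I.Solution) : ℝ :=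
  (s.tours.map Tour.cost).sum

end TreeCVRP

/-! The extremal instance is a star: the root `0`, a hub `1` below it and `2m` leaves `v ≥ 2`
below the hub, all edges of length `1`, every leaf with demand `2m + 1` and capacity `4m + 1`, so
that `LB = 2(m + 1) + 4m = 6m + 2`. A tour serving some leaf crosses the hub edge at least twice
and every edge to a leaf it serves at least twice, so a solution costs at least
`2 · (#tours used) + 2 · (#tour-leaf incidences)`. Since a leaf's demand exceeds half the capacity,
no tour is the only server of two leaves; so the leaves with a single server inject into the tours
used, while every other leaf has at least two servers. Hence the cost is at least `4 · 2m = 8m`,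
and `8m / (6m + 2) → 4/3`. -/

open Finset

theorem two_mul_card_le_of_cap_lt_two_mul_demand {ι β : Type*} [Fintype ι] (c : ι → β → ℝ)
    (hc : ∀ i v, 0 ≤ c i v) (B : Finset β) {D Q : ℝ} (hD : 0 < D) (hQ : Q < 2 * D)
    (hcap : ∀ i, ∑ v ∈ B, c i v ≤ Q) (hdem : ∀ v ∈ B, D ≤ ∑ i, c i v) :
    2 * #B ≤ #{i | ({v ∈ B | 0 < c i v}).Nonempty} + ∑ i, #{v ∈ B | 0 < c i v} := by
  have hserved : ∀ v ∈ B, ∃ i, 0 < c i v := by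
    intro v hv
    by_contra! h
    linarith [hdem v hv, sum_nonpos fun i (_ : i ∈ univ) => h i]
  have hsole : ∀ v i, #{j | 0 < c j v} ≤ 1 → 0 < c i v → ∑ j, c j v = c i v := by
    intro v i hv hi
    refine sum_eq_single i (fun j _ hji => ?_) (by simp)
    by_contra hne
    have hj : 0 < c j v := (hc j v).lt_of_ne' hne
    have : 1 < #{j | 0 < c j v} := one_lt_card.mpr ⟨j, by simp [hj], i, by simp [hi], hji⟩
    omega
  -- A vertex with a single server takes more than half of that server's capacity.
  set A := {v ∈ B | #{i | 0 < c i v} ≤ 1}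
  have hA : #A ≤ #{i | ({v ∈ B | 0 < c i v}).Nonempty} := by
    refine card_le_card_of_forall_subsingleton (r := fun v i => 0 < c i v) (fun v hv => ?_) ?_
    · obtain ⟨i, hi⟩ := hserved v (mem_filter.mp hv).1
      exact ⟨i, by simpa using ⟨v, mem_filter.mpr ⟨(mem_filter.mp hv).1, hi⟩⟩, hi⟩
    · rintro i - v ⟨hvA, hv⟩ w ⟨hwA, hw⟩
      by_contra hvw
      rw [mem_filter] at hvA hwA
      have hpair : c i v + c i w ≤ ∑ u ∈ B, c i u := by
        rw [← sum_pair hvw]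
        exact sum_le_sum_of_subset_of_nonneg (insert_subset hvA.1 (singleton_subset_iff.mpr hwA.1))
          fun u _ _ => hc i u
      linarith [hdem v hvA.1, hdem w hwA.1, hsole v i hvA.2 hv, hsole w i hwA.2 hw, hcap i]
  have hcount : 2 * #B ≤ #A + ∑ v ∈ B, #{i | 0 < c i v} := by
    rw [card_filter, ← sum_add_distrib, mul_comm, ← smul_eq_mul, ← sum_const]
    refine sum_le_sum fun v hv => ?_
    obtain ⟨i, hi⟩ := hserved v hv
    have : 0 < #{i | 0 < c i v} := card_pos.mpr ⟨i, by simpa using hi⟩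
    split_ifs <;> omega
  have hdouble : ∑ v ∈ B, #{i | 0 < c i v} = ∑ i, #{v ∈ B | 0 < c i v} :=
    sum_card_bipartiteAbove_eq_sum_card_bipartiteBelow (r := fun v i => 0 < c i v)
  omega

namespace TreeCVRP

variable {V : Type} [Fintype V] {I : TreeCVRP V}

namespace Tour

theorem two_le_crossings_of_cover_pos (t : I.Tour) {v : V} (hv : v ≠ I.root)
    (hcover : 0 < t.cover v) : 2 ≤ t.crossings v := by
  obtain ⟨k, hk⟩ := t.crossings_even v
  have := (t.cover_visited v hcover).resolve_left hv
  omega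

theorem two_le_crossings_parent_of_cover_pos (t : I.Tour) {v : V} (hv : v ≠ I.root)
    (hparent : I.parent v ≠ I.root) (hcover : 0 < t.cover v) :
    2 ≤ t.crossings (I.parent v) := by
  obtain ⟨k, hk⟩ := t.crossings_even (I.parent v)
  have := (t.crossings_connected v (by have := t.two_le_crossings_of_cover_pos hv hcover; omega))
    |>.resolve_left hparent
  omega

end Tour

theorem Solution.cost_eq_sum (s : I.Solution) :
    s.cost = ∑ i : Fin s.tours.length, s.tours[i.1].cost :=
  (Fin.sum_univ_fun_getElem _ _).symm

theorem Solution.sum_cover_eq_demand (s : I.Solution) (v : V) :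
    ∑ i : Fin s.tours.length, s.tours[i.1].cover v = I.demand v :=
  (Fin.sum_univ_fun_getElem s.tours (·.cover v)).trans (s.covers_demand v)

noncomputable def starInstance (m : ℕ) : TreeCVRP (Fin (2 * m + 2)) where
  root := 0
  parent v := if 2 ≤ v.val then 1 else 0
  parent_root := by simp
  reaches_root v := ⟨2, by by_cases h : 2 ≤ v.val <;> simp [h]⟩
  len _ := 1
  len_nonneg _ := zero_le_one
  demand v := if 2 ≤ v.val then 2 * m + 1 else 0
  demand_nonneg v := by split <;> positivity
  demand_root := by simp
  cap := 4 * m + 1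
  cap_pos := by positivity

def starLeaves (m : ℕ) : Finset (Fin (2 * m + 2)) := {v | 2 ≤ v.val}

variable {m : ℕ}

theorem card_starLeaves : #(starLeaves m) = 2 * m := by
  have := card_filter_add_card_filter_not (s := (univ : Finset (Fin (2 * m + 2))))
    (fun v => v.val < 2)
  rw [Fin.card_filter_val_lt, card_univ, Fintype.card_fin] at this
  simp only [not_lt] at this
  rw [starLeaves]
  omega

@[simp] theorem starInstance_root : (starInstance m).root = 0 := rfl

@[simp] theorem starInstance_len (v : Fin (2 * m + 2)) : (starInstance m).len v = 1 := rfl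

theorem mem_starLeaves {v : Fin (2 * m + 2)} : v ∈ starLeaves m ↔ 2 ≤ v.val := by
  simp [starLeaves]

theorem starInstance_ne_root {v : Fin (2 * m + 2)} (hv : v ∈ starLeaves m) :
    v ≠ (starInstance m).root := by
  rintro rfl
  simp [starInstance, mem_starLeaves] at hv

theorem starInstance_parent {v : Fin (2 * m + 2)} (hv : v ∈ starLeaves m) :
    (starInstance m).parent v = 1 := by
  simp [starInstance, mem_starLeaves.mp hv]

theorem starInstance_demand {v : Fin (2 * m + 2)} :
    (starInstance m).demand v = if v ∈ starLeaves m then (2 * m + 1 : ℝ) else 0 := by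
  simp [starInstance, mem_starLeaves]

theorem starInstance_inSubtree_iff {w v : Fin (2 * m + 2)} (hw : w ∈ starLeaves m) :
    (starInstance m).inSubtree w v ↔ v = w := by
  refine ⟨fun ⟨n, hn⟩ => ?_, fun h => ⟨0, h⟩⟩
  cases n with
  | zero => exact hn
  | succ n =>
    rw [← hn, Function.iterate_succ_apply'] at hw
    simp only [starInstance, mem_starLeaves] at hw
    split_ifs at hw <;> simp at hw

theorem starInstance_subtreeDemand_leaf {w : Fin (2 * m + 2)} (hw : w ∈ starLeaves m) :
    (starInstance m).subtreeDemand w = (2 * m + 1 : ℝ) := by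
  rw [subtreeDemand, filter_congr fun v _ => starInstance_inSubtree_iff hw, filter_eq',
    if_pos (mem_univ w), sum_singleton, starInstance_demand, if_pos hw]

theorem starInstance_subtreeDemand_one :
    (starInstance m).subtreeDemand 1 = (2 * m * (2 * m + 1) : ℝ) := by
  have hsub : ∀ v ∈ starLeaves m, (starInstance m).inSubtree 1 v :=
    fun v hv => ⟨1, starInstance_parent hv⟩
  rw [subtreeDemand, sum_filter]
  calc ∑ v, (if (starInstance m).inSubtree 1 v then (starInstance m).demand v else 0)
      = ∑ v, (if v ∈ starLeaves m then (2 * m + 1 : ℝ) else 0) := by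
        refine sum_congr rfl fun v _ => ?_
        by_cases hv : v ∈ starLeaves m <;> simp [starInstance_demand, hv, hsub]
    _ = 2 * m * (2 * m + 1) := by
        rw [sum_ite_mem, univ_inter, sum_const, card_starLeaves, nsmul_eq_mul]
        push_cast
        ring

theorem starInstance_lowerBound (hm : 1 ≤ m) : (starInstance m).lowerBound = 6 * m + 2 := by
  have hm' : (1 : ℝ) ≤ m := by exact_mod_cast hm
  have hcap : (starInstance m).cap = 4 * m + 1 := rfl
  have hceil_one : ⌈(starInstance m).subtreeDemand 1 / (starInstance m).cap⌉ = m + 1 := by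
    rw [starInstance_subtreeDemand_one, hcap, Int.ceil_eq_iff]
    push_cast
    constructor
    · rw [lt_div_iff₀ (by positivity)]
      nlinarith
    · rw [div_le_iff₀ (by positivity)]
      nlinarith
  have hceil_leaf : ∀ v ∈ starLeaves m,
      ⌈(starInstance m).subtreeDemand v / (starInstance m).cap⌉ = 1 := by
    intro v hv
    rw [starInstance_subtreeDemand_leaf hv, hcap, Int.ceil_eq_iff]
    push_cast
    constructor
    · norm_num
      positivity
    · rw [div_le_iff₀ (by positivity)]
      linarith
  have hedges : univ.filter (fun v => v ≠ (starInstance m).root) = insert 1 (starLeaves m) := by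
    ext v
    rw [mem_filter, mem_insert, mem_starLeaves, starInstance_root, ne_eq, Fin.ext_iff, Fin.ext_iff,
      Fin.val_zero, Fin.val_one]
    simp only [mem_univ, true_and]
    omega
  rw [lowerBound, filter_congr_decidable, hedges, sum_insert (by simp [mem_starLeaves]), hceil_one,
    sum_congr rfl fun v hv => by rw [hceil_leaf v hv]]
  simp [card_starLeaves]
  ring

theorem starInstance_le_tour_cost (t : (starInstance m).Tour) :
    2 * ((if ({v ∈ starLeaves m | 0 < t.cover v}).Nonempty then 1 else 0) +
      (#{v ∈ starLeaves m | 0 < t.cover v} : ℝ)) ≤ t.cost := by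
  set F := {v ∈ starLeaves m | 0 < t.cover v}
  have hcost : t.cost = ∑ v, (t.crossings v : ℝ) := by simp [Tour.cost]
  have hleaf : ∀ v ∈ F, 2 ≤ t.crossings v := fun v hv =>
    t.two_le_crossings_of_cover_pos (starInstance_ne_root (mem_filter.mp hv).1) (mem_filter.mp hv).2
  split_ifs with hactive
  · obtain ⟨v, hv⟩ := hactive
    obtain ⟨hv, hcover⟩ := mem_filter.mp hv
    have hhub : 2 ≤ t.crossings 1 := by
      simpa [starInstance_parent hv] using t.two_le_crossings_parent_of_cover_pos
        (starInstance_ne_root hv) (by simp [starInstance_parent hv]) hcover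
    have h1F : (1 : Fin (2 * m + 2)) ∉ F := fun h => by
      simpa [mem_starLeaves] using (mem_filter.mp h).1
    calc 2 * (1 + (#F : ℝ)) = ∑ u ∈ insert 1 F, (2 : ℝ) := by
          rw [sum_insert h1F, sum_const, nsmul_eq_mul]
          ring
      _ ≤ ∑ u ∈ insert 1 F, (t.crossings u : ℝ) := by
          refine sum_le_sum fun u hu => ?_
          rcases mem_insert.mp hu with rfl | hu
          · exact_mod_cast hhub
          · exact_mod_cast hleaf u hu
      _ ≤ t.cost := hcost ▸ sum_le_sum_of_subset_of_nonneg (subset_univ _) fun _ _ _ => by positivity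
  · rw [not_nonempty_iff_eq_empty.mp hactive, hcost]
    simp only [card_empty, Nat.cast_zero, add_zero, mul_zero]
    positivity

theorem starInstance_eight_mul_le_solution_cost (s : (starInstance m).Solution) :
    8 * m ≤ s.cost := by
  have hcap (i : Fin s.tours.length) : ∑ v ∈ starLeaves m, s.tours[i.1].cover v ≤ 4 * m + 1 :=
    (sum_le_sum_of_subset_of_nonneg (subset_univ _) fun v _ _ => s.tours[i.1].cover_nonneg v).trans
      s.tours[i.1].cover_le_cap
  have hdem (v) (hv : v ∈ starLeaves m) :
      2 * m + 1 ≤ ∑ i : Fin s.tours.length, s.tours[i.1].cover v := by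
    rw [s.sum_cover_eq_demand, starInstance_demand, if_pos hv]
  have hcount := two_mul_card_le_of_cap_lt_two_mul_demand
    (fun (i : Fin s.tours.length) v => s.tours[i.1].cover v)
    (fun i v => s.tours[i.1].cover_nonneg v) (starLeaves m) (by positivity) (by linarith) hcap hdem
  rw [card_starLeaves] at hcount
  rw [s.cost_eq_sum]
  refine le_trans ?_ (sum_le_sum fun i _ => starInstance_le_tour_cost s.tours[i.1])
  rw [← mul_sum, sum_add_distrib, ← natCast_card_filter]
  exact_mod_cast (by omega : 8 * m ≤ 2 * (_ + _))

end TreeCVRP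

/-- For every `ε > 0` there is an instance of splittable
Capacitated Vehicle Routing on a tree with `LB > 0` such that every feasible
solution costs at least `(4/3 − ε)·LB`; i.e. the ratio `OPT/LB` can be made
arbitrarily close to `4/3`. -/
theorem cvrp_tree_lowerBound_ratio_tight (ε : ℝ) (hε : 0 < ε) :
    ∃ (n : ℕ) (I : TreeCVRP (Fin n)), 0 < I.lowerBound ∧
      ∀ s : I.Solution, (4 / 3 - ε) * I.lowerBound ≤ s.cost := by
  obtain ⟨m, hm⟩ := exists_nat_gt ε⁻¹
  have hεm : 1 < m * ε := (inv_lt_iff_one_lt_mul₀ hε).mp hm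
  have hm1 : 1 ≤ m := by exact_mod_cast (inv_pos.mpr hε).trans hm
  refine ⟨2 * m + 2, TreeCVRP.starInstance m, ?_, fun s => ?_⟩
  all_goals rw [TreeCVRP.starInstance_lowerBound hm1]
  · positivity
  · linarith [TreeCVRP.starInstance_eight_mul_le_solution_cost s]
end

section
/- Let p ≥ 2 be an integer and let x₁, …, x_p, and y₁, …, y_{p−1}, z₁, …, z_{p−1} be nonnegative real numbers satisfying: z₁ ≤ y₁ ≤ x₁, and for every i with 2 ≤ i ≤ p−1, z_i ≤ y_i and z_i ≤ Σ_{j=i+1}^{p} x_j. Then p·x_p + Σ_{i=1}^{p−1} (i·x_i + 2·z_i + y_i) ≤ (4/3)·( p·x_p + Σ_{i=1}^{p−1} (i·x_i + z_i + y_i) ). (This is the inequality showing that the cascade tour set resolves a long p-chain rooted at the depot: x_i is the length of stem edge e_i^0, y_i and z_i are the lengths of the level-i leaf edges e_i^1 and e_i^2 with y_i ≥ z_i; the 2-chain at the bottom satisfies x₁ ≥ y₁ ≥ z₁; the long condition gives z_i ≤ Σ_{j>i} x_j, the distance from the level-(i+1) chain vertex to the depot. The left side is half the cost of the p cascade tours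 and the right-hand bracket is half the reduction in the traffic lower bound.) -/
/-!
Writing `X = p x_p + ∑ i x_i`, `Y = ∑ y_i`, `Z = ∑ z_i`, the claim is `2 Z ≤ X + Y`, so it suffices
that `Z ≤ Y` and `Z ≤ X`. The first is termwise. For the second, `z_1 ≤ x_1`, and the long
condition bounds `∑_{i ≥ 2} z_i` by the double sum `∑_{i ≥ 2} ∑_{j > i} x_j`, in which each `x_j`
occurs `j - 2 ≤ j` times.
-/

open Finset

theorem sum_Icc_sum_Icc_add_one_eq_sum_nsmul {M : Type*} [AddCommMonoid M] (a m : ℕ)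
    (f : ℕ → M) :
    ∑ i ∈ Icc a (m - 1), ∑ j ∈ Icc (i + 1) m, f j = ∑ j ∈ Icc a m, (j - a) • f j := by
  calc ∑ i ∈ Icc a (m - 1), ∑ j ∈ Icc (i + 1) m, f j
      = ∑ j ∈ Icc a m, ∑ _i ∈ Ico a j, f j :=
        sum_comm' fun i j => by simp only [mem_Icc, mem_Ico]; omega
    _ = ∑ j ∈ Icc a m, (j - a) • f j := by simp only [sum_const, Nat.card_Ico]

theorem sum_Icc_sum_Icc_add_one_le_sum_mul {R : Type*} [Semiring R] [PartialOrder R]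
    [IsOrderedRing R] (a m : ℕ) (f : ℕ → R) (hf : ∀ j ∈ Icc a m, 0 ≤ f j) :
    ∑ i ∈ Icc a (m - 1), ∑ j ∈ Icc (i + 1) m, f j ≤ ∑ j ∈ Icc a m, (j : R) * f j := by
  rw [sum_Icc_sum_Icc_add_one_eq_sum_nsmul]
  refine sum_le_sum fun j hj => ?_
  rw [nsmul_eq_mul]
  exact mul_le_mul_of_nonneg_right (Nat.mono_cast (Nat.sub_le j a)) (hf j hj)

theorem mul_add_sum_Icc_sub_one_eq_sum_Icc {R : Type*} [Semiring R] (p : ℕ) (f : ℕ → R) :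
    (p : R) * f p + ∑ i ∈ Icc 1 (p - 1), (i : R) * f i = ∑ i ∈ Icc 1 p, (i : R) * f i := by
  cases p with
  | zero => simp
  | succ n => rw [Nat.add_sub_cancel, sum_Icc_succ_top (by omega), add_comm]

theorem sum_Icc_le_sum_Icc_mul_of_le_tail (p : ℕ) (hp : 2 ≤ p) (x z : ℕ → ℝ)
    (hx : ∀ i ∈ Icc 1 p, 0 ≤ x i) (hzx1 : z 1 ≤ x 1)
    (htail : ∀ i ∈ Icc 2 (p - 1), z i ≤ ∑ j ∈ Icc (i + 1) p, x j) :
    ∑ i ∈ Icc 1 (p - 1), z i ≤ ∑ i ∈ Icc 1 p, (i : ℝ) * x i := by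
  rw [← add_sum_Ioc_eq_sum_Icc (by omega), ← add_sum_Ioc_eq_sum_Icc (by omega),
    ← Icc_add_one_left_eq_Ioc, ← Icc_add_one_left_eq_Ioc, Nat.cast_one, one_mul]
  have hx' : ∀ j ∈ Icc 2 p, 0 ≤ x j := fun j hj => hx j (Icc_subset_Icc_left (by norm_num) hj)
  gcongr
  exact (sum_le_sum htail).trans (sum_Icc_sum_Icc_add_one_le_sum_mul 2 p x hx')

theorem long_pchain_cascade_at_root_general
    (p : ℕ) (hp : 2 ≤ p) (x y z : ℕ → ℝ)
    (hx : ∀ i ∈ Finset.Icc 1 p, 0 ≤ x i)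
    (hzy1 : z 1 ≤ y 1) (hyx1 : y 1 ≤ x 1)
    (hlong : ∀ i, 2 ≤ i → i ≤ p - 1 →
      z i ≤ y i ∧ z i ≤ ∑ j ∈ Finset.Icc (i + 1) p, x j) :
    (p : ℝ) * x p + ∑ i ∈ Finset.Icc 1 (p - 1), ((i : ℝ) * x i + 2 * z i + y i) ≤
      4 / 3 *
        ((p : ℝ) * x p + ∑ i ∈ Finset.Icc 1 (p - 1), ((i : ℝ) * x i + z i + y i)) := by
  have hZY : ∑ i ∈ Icc 1 (p - 1), z i ≤ ∑ i ∈ Icc 1 (p - 1), y i := by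
    refine sum_le_sum fun i hi => ?_
    obtain ⟨h1i, hip⟩ := mem_Icc.mp hi
    rcases h1i.eq_or_lt with rfl | h2i
    · exact hzy1
    · exact (hlong i h2i hip).1
  have hZX : ∑ i ∈ Icc 1 (p - 1), z i ≤ ∑ i ∈ Icc 1 p, (i : ℝ) * x i :=
    sum_Icc_le_sum_Icc_mul_of_le_tail p hp x z hx (hzy1.trans hyx1)
      fun i hi => (hlong i (mem_Icc.mp hi).1 (mem_Icc.mp hi).2).2
  rw [← mul_add_sum_Icc_sub_one_eq_sum_Icc] at hZX
  simp only [sum_add_distrib, ← mul_sum]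
  linarith

/-- The cascade inequality for a long p-chain at the depot:
`x i` is the length of stem edge `e_i^0`, `y i ≥ z i` are the lengths of the
level-`i` leaf edges; the bottom 2-chain satisfies `z 1 ≤ y 1 ≤ x 1` and the
long condition gives `z i ≤ Σ_{j=i+1}^{p} x j` for `2 ≤ i ≤ p−1`.  Then half
the cascade cost is at most `4/3` times half the lower-bound reduction. -/
theorem long_pchain_cascade_at_root
    (p : ℕ) (hp : 2 ≤ p) (x y z : ℕ → ℝ)
    (hx : ∀ i ∈ Finset.Icc 1 p, 0 ≤ x i)
    (hy : ∀ i ∈ Finset.Icc 1 (p - 1), 0 ≤ y i)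
    (hz : ∀ i ∈ Finset.Icc 1 (p - 1), 0 ≤ z i)
    (hzy1 : z 1 ≤ y 1) (hyx1 : y 1 ≤ x 1)
    (hlong : ∀ i, 2 ≤ i → i ≤ p - 1 →
      z i ≤ y i ∧ z i ≤ ∑ j ∈ Finset.Icc (i + 1) p, x j) :
    (p : ℝ) * x p + ∑ i ∈ Finset.Icc 1 (p - 1), ((i : ℝ) * x i + 2 * z i + y i) ≤
      4 / 3 *
        ((p : ℝ) * x p + ∑ i ∈ Finset.Icc 1 (p - 1), ((i : ℝ) * x i + z i + y i)) :=
  long_pchain_cascade_at_root_general p hp x y z hx hzy1 hyx1 hlong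
end

section
/- Let p ≥ 2 and p′ ≥ 2 be integers, let a ≥ 0 be a real number, and let x₁,…,x_p, y₁,…,y_{p−1}, z₁,…,z_{p−1} and x′₁,…,x′_{p′}, y′₁,…,y′_{p′−1}, z′₁,…,z′_{p′−1} be nonnegative reals satisfying: z₁ ≤ y₁ ≤ x₁ and z′₁ ≤ y′₁ ≤ x′₁; for 2 ≤ i ≤ p−1, z_i ≤ y_i and z_i ≤ a + Σ_{j=i+1}^{p} x_j; and for 2 ≤ i ≤ p′−1, z′_i ≤ y′_i and z′_i ≤ a + Σ_{j=i+1}^{p′} x′_j. Then p·x_p + Σ_{i=1}^{p−1}(i·x_i + 2z_i + y_i) + p′·x′_{p′} + Σ_{i=1}^{p′−1}(i·x′_i + 2z′_i + y′_i) + (p+p′)·a ≤ (4/3)·( p·x_p + Σ_{i=1}^{p−1}(i·x_i + z_i + y_i) + p′·x′_{p′} + Σ_{i=1}^{p′−1}(i·x′_i + z′_i + y′_i) + (p+p′−1)·a ). (This is the inequality showing that two sibling long chains — a long p-chain and a long p′-chain hanging at a common vertex u at distance a from the depot — can be resolved together by their two cascades: the left side is half the cost of the p + p′ cascade tours, and the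 right-hand bracket is half the reduction in the traffic lower bound, using that the total demand of a p-chain exceeds p − 0.5 so covering both chains reduces traffic on the u-to-depot path by at least p + p′ − 1.) -/
/-!
Write `Z = ∑ zᵢ` and `B = p xₚ + ∑ (i xᵢ + yᵢ)` for a chain. Subtracting, the inequality says
`2 (Z + Z') ≤ B + B' + (p + p' - 4) a`, so it suffices to show `2 Z ≤ B + (p - 2) a` for each
chain separately. There `2 z₁ ≤ y₁ + x₁`, and for `i ≥ 2` the long-chain condition gives
`2 zᵢ ≤ yᵢ + a + tᵢ` with the tail `tᵢ = ∑_{j > i} xⱼ`. The tails are absorbed by the weights of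
the `xⱼ`, because `∑ⱼ j xⱼ = ∑_{i < p} tᵢ = x₁ + 2 t₁ + ∑_{2 ≤ i < p} tᵢ`.
-/

open Finset

theorem sum_Icc_nsmul_eq_sum_range_sum_Icc {M : Type*} [AddCommMonoid M] (f : ℕ → M) (n : ℕ) :
    ∑ j ∈ Icc 1 n, j • f j = ∑ i ∈ range n, ∑ j ∈ Icc (i + 1) n, f j := by
  rw [sum_comm' (t' := Icc 1 n) (s' := range)]
  · simp only [sum_const, card_range]
  · intro i j
    simp only [mem_range, mem_Icc]
    omega

theorem two_mul_sum_le_of_long_chain (p : ℕ) (hp : 2 ≤ p) (a : ℝ) (x y z : ℕ → ℝ)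
    (hx : ∀ i ∈ Icc 2 p, 0 ≤ x i) (hzy1 : z 1 ≤ y 1) (hyx1 : y 1 ≤ x 1)
    (hlong : ∀ i, 2 ≤ i → i ≤ p - 1 →
      z i ≤ y i ∧ z i ≤ a + ∑ j ∈ Icc (i + 1) p, x j) :
    2 * ∑ i ∈ Icc 1 (p - 1), z i ≤
      p * x p + ∑ i ∈ Icc 1 (p - 1), (i : ℝ) * x i + ∑ i ∈ Icc 1 (p - 1), y i +
        ((p : ℝ) - 2) * a := by
  set tail : ℕ → ℝ := fun i ↦ ∑ j ∈ Icc (i + 1) p, x j with htail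
  have hweighted :
      ∑ j ∈ Icc 1 p, (j : ℝ) * x j = tail 0 + tail 1 + ∑ i ∈ Icc 2 (p - 1), tail i := by
    have hrange : range p = insert 0 (insert 1 (Icc 2 (p - 1))) := by ext; simp; omega
    simp only [← nsmul_eq_mul, sum_Icc_nsmul_eq_sum_range_sum_Icc, hrange]
    rw [sum_insert (by simp), sum_insert (by simp), add_assoc]
  have hweighted_top :
      ∑ j ∈ Icc 1 p, (j : ℝ) * x j = p * x p + ∑ i ∈ Icc 1 (p - 1), (i : ℝ) * x i := by
    have : Icc 1 p = insert p (Icc 1 (p - 1)) := by ext; simp; omega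
    rw [this, sum_insert (by simp; omega)]
  have htail_zero : tail 0 = x 1 + tail 1 := by
    have : Icc 1 p = insert 1 (Icc 2 p) := by ext; simp; omega
    simp only [htail, zero_add, this, sum_insert (by simp : 1 ∉ Icc 2 p)]
  have htail_one : 0 ≤ tail 1 := sum_nonneg hx
  have hz : 2 * ∑ i ∈ Icc 2 (p - 1), z i ≤
      ∑ i ∈ Icc 2 (p - 1), y i + ∑ i ∈ Icc 2 (p - 1), a + ∑ i ∈ Icc 2 (p - 1), tail i := by
    rw [mul_sum, ← sum_add_distrib, ← sum_add_distrib]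
    refine sum_le_sum fun i hi ↦ ?_
    rw [mem_Icc] at hi
    have := hlong i hi.1 hi.2
    linarith
  have hcard : ∑ i ∈ Icc 2 (p - 1), a = ((p : ℝ) - 2) * a := by
    rw [sum_const, Nat.card_Icc, nsmul_eq_mul, show p - 1 + 1 - 2 = p - 2 by omega,
      Nat.cast_sub hp, Nat.cast_two]
  have hIcc_one : Icc 1 (p - 1) = insert 1 (Icc 2 (p - 1)) := by ext; simp; omega
  simp only [hIcc_one, sum_insert (by simp : 1 ∉ Icc 2 (p - 1))] at hweighted_top ⊢
  linarith

theorem sibling_long_pchains_cascade_general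
    (p p' : ℕ) (hp : 2 ≤ p) (hp' : 2 ≤ p') (a : ℝ)
    (x y z x' y' z' : ℕ → ℝ)
    (hx : ∀ i ∈ Finset.Icc 1 p, 0 ≤ x i)
    (hx' : ∀ i ∈ Finset.Icc 1 p', 0 ≤ x' i)
    (hzy1 : z 1 ≤ y 1) (hyx1 : y 1 ≤ x 1)
    (hzy1' : z' 1 ≤ y' 1) (hyx1' : y' 1 ≤ x' 1)
    (hlong : ∀ i, 2 ≤ i → i ≤ p - 1 →
      z i ≤ y i ∧ z i ≤ a + ∑ j ∈ Finset.Icc (i + 1) p, x j)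
    (hlong' : ∀ i, 2 ≤ i → i ≤ p' - 1 →
      z' i ≤ y' i ∧ z' i ≤ a + ∑ j ∈ Finset.Icc (i + 1) p', x' j) :
    (p : ℝ) * x p + (∑ i ∈ Finset.Icc 1 (p - 1), ((i : ℝ) * x i + 2 * z i + y i)) +
        (p' : ℝ) * x' p' +
        (∑ i ∈ Finset.Icc 1 (p' - 1), ((i : ℝ) * x' i + 2 * z' i + y' i)) +
        ((p : ℝ) + (p' : ℝ)) * a ≤
      4 / 3 *
        ((p : ℝ) * x p + (∑ i ∈ Finset.Icc 1 (p - 1), ((i : ℝ) * x i + z i + y i)) +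
          (p' : ℝ) * x' p' +
          (∑ i ∈ Finset.Icc 1 (p' - 1), ((i : ℝ) * x' i + z' i + y' i)) +
          ((p : ℝ) + (p' : ℝ) - 1) * a) := by
  have hchain := two_mul_sum_le_of_long_chain p hp a x y z
    (fun i hi ↦ hx i (Icc_subset_Icc_left one_le_two hi)) hzy1 hyx1 hlong
  have hchain' := two_mul_sum_le_of_long_chain p' hp' a x' y' z'
    (fun i hi ↦ hx' i (Icc_subset_Icc_left one_le_two hi)) hzy1' hyx1' hlong'
  simp only [sum_add_distrib, ← mul_sum]
  linarith

/-- The inequality resolving two sibling long chains (a long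
p-chain and a long p′-chain hanging at a common vertex at distance `a` from the
depot) by their two cascades: the left side is half the cost of the `p + p′`
cascade tours, and the right-hand bracket is half the reduction in the traffic
lower bound. -/
theorem sibling_long_pchains_cascade
    (p p' : ℕ) (hp : 2 ≤ p) (hp' : 2 ≤ p') (a : ℝ) (ha : 0 ≤ a)
    (x y z x' y' z' : ℕ → ℝ)
    (hx : ∀ i ∈ Finset.Icc 1 p, 0 ≤ x i)
    (hy : ∀ i ∈ Finset.Icc 1 (p - 1), 0 ≤ y i)
    (hz : ∀ i ∈ Finset.Icc 1 (p - 1), 0 ≤ z i)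
    (hx' : ∀ i ∈ Finset.Icc 1 p', 0 ≤ x' i)
    (hy' : ∀ i ∈ Finset.Icc 1 (p' - 1), 0 ≤ y' i)
    (hz' : ∀ i ∈ Finset.Icc 1 (p' - 1), 0 ≤ z' i)
    (hzy1 : z 1 ≤ y 1) (hyx1 : y 1 ≤ x 1)
    (hzy1' : z' 1 ≤ y' 1) (hyx1' : y' 1 ≤ x' 1)
    (hlong : ∀ i, 2 ≤ i → i ≤ p - 1 →
      z i ≤ y i ∧ z i ≤ a + ∑ j ∈ Finset.Icc (i + 1) p, x j)
    (hlong' : ∀ i, 2 ≤ i → i ≤ p' - 1 →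
      z' i ≤ y' i ∧ z' i ≤ a + ∑ j ∈ Finset.Icc (i + 1) p', x' j) :
    (p : ℝ) * x p + (∑ i ∈ Finset.Icc 1 (p - 1), ((i : ℝ) * x i + 2 * z i + y i)) +
        (p' : ℝ) * x' p' +
        (∑ i ∈ Finset.Icc 1 (p' - 1), ((i : ℝ) * x' i + 2 * z' i + y' i)) +
        ((p : ℝ) + (p' : ℝ)) * a ≤
      4 / 3 *
        ((p : ℝ) * x p + (∑ i ∈ Finset.Icc 1 (p - 1), ((i : ℝ) * x i + z i + y i)) +
          (p' : ℝ) * x' p' +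
          (∑ i ∈ Finset.Icc 1 (p' - 1), ((i : ℝ) * x' i + z' i + y' i)) +
          ((p : ℝ) + (p' : ℝ) - 1) * a) :=
  sibling_long_pchains_cascade_general p p' hp hp' a x y z x' y' z' hx hx' hzy1 hyx1 hzy1' hyx1'
    hlong hlong'
end

section
/- Consider an instance of splittable Capacitated Vehicle Routing on a tree with capacity Q > 0, and let v be a leaf with demand d(v) ≥ Q. Let the modified instance be obtained by decreasing the demand at v by Q (all other data unchanged). Then LB of the modified instance equals LB of the original instance minus 2·l(P[r,v]), where l(P[r,v]) is the total length of the path from the depot r to v. Consequently, the single round-trip tour from r to v covering Q demand at v has cost exactly equal to the resulting reduction of the lower bound (it is a 1-approximate tour). -/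
open scoped Classical

namespace TreeCVRP

variable {V : Type} [Fintype V]

/-- `l(P[r,v])`: the total length of the path from the depot to `v`, i.e. the sum
of the lengths of the edges above the non-root ancestors of `v`. -/
noncomputable def pathLen (I : TreeCVRP V) (v : V) : ℝ :=
  ∑ w ∈ Finset.univ.filter (fun w => w ≠ I.root ∧ I.inSubtree w v), I.len w

/-- The modified instance obtained by decreasing the demand at `v` by `Q`,
all other data unchanged. -/
noncomputable def decreaseDemand (I : TreeCVRP V) (v : V) (hv : v ≠ I.root)
    (hd : I.cap ≤ I.demand v) : TreeCVRP V :=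
  { I with
    demand := fun u => if u = v then I.demand v - I.cap else I.demand u
    demand_nonneg := by
      intro u
      by_cases h : u = v
      · simp [h, sub_nonneg.mpr hd]
      · simp [h, I.demand_nonneg u]
    demand_root := by
      have h : I.root ≠ v := fun h => hv h.symm
      simp [h, I.demand_root] }

end TreeCVRP

/-!
Removing `Q` units of demand at `v` lowers `d(T_w)` by exactly `Q` for every ancestor `w` of `v`
and leaves it unchanged elsewhere. Since `⌈(x - Q)/Q⌉ = ⌈x/Q⌉ - 1`, each edge on `P[r,v]` loses
exactly one unit of traffic in `LB`, i.e. `2·l(e)`, which is the cost of the round trip to `v`.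
-/

namespace TreeCVRP

variable {V : Type} [Fintype V] (I : TreeCVRP V)

theorem inSubtree_refl (v : V) : I.inSubtree v v := ⟨0, rfl⟩

theorem inSubtree.parent {u v : V} (h : I.inSubtree u v) : I.inSubtree (I.parent u) v := by
  obtain ⟨n, hn⟩ := h
  exact ⟨n + 1, by rw [Function.iterate_succ_apply', hn]⟩

theorem ceil_sub_div_self {Q : ℝ} (hQ : Q ≠ 0) (x : ℝ) : ⌈(x - Q) / Q⌉ = ⌈x / Q⌉ - 1 := by
  rw [sub_div, div_self hQ, Int.ceil_sub_one]

theorem sum_ite_inSubtree_eq_two_mul_pathLen (v : V) :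
    ∑ w ∈ Finset.univ.filter (fun w => w ≠ I.root),
        (if I.inSubtree w v then 2 * I.len w else 0) = 2 * I.pathLen v := by
  rw [← Finset.sum_filter, Finset.filter_filter, pathLen, Finset.mul_sum]

variable {v : V} (hv : v ≠ I.root)

noncomputable def roundTrip : I.Tour where
  crossings u := if u ≠ I.root ∧ I.inSubtree u v then 2 else 0
  crossings_root := by simp
  crossings_even u := by split_ifs <;> simp
  crossings_connected u hu := by
    obtain ⟨-, hsub⟩ : u ≠ I.root ∧ I.inSubtree u v := by
      by_contra h
      simp [h] at hu
    by_cases hr : I.parent u = I.root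
    · exact Or.inl hr
    · simp [hr, hsub.parent]
  cover u := if u = v then I.cap else 0
  cover_nonneg u := by split_ifs <;> simp [I.cap_pos.le]
  cover_visited u hu := by
    obtain rfl : u = v := by
      by_contra h
      simp [h] at hu
    simp [hv, I.inSubtree_refl]
  cover_le_cap := by simp

theorem roundTrip_cost : (I.roundTrip hv).cost = 2 * I.pathLen v := by
  rw [← sum_ite_inSubtree_eq_two_mul_pathLen, Tour.cost, ← Finset.sum_filter_add_sum_filter_not _ (· ≠ I.root)]
  simp only [roundTrip]
  refine (add_eq_left.mpr (Finset.sum_eq_zero fun u hu => ?_)).trans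
    (Finset.sum_congr rfl fun u hu => ?_)
  · simp [(Finset.mem_filter.mp hu).2]
  · split_ifs <;> simp_all

variable (hd : I.cap ≤ I.demand v)

theorem subtreeDemand_decreaseDemand (w : V) :
    (I.decreaseDemand v hv hd).subtreeDemand w =
      I.subtreeDemand w - if I.inSubtree w v then I.cap else 0 := by
  have hdemand : ∀ u, (I.decreaseDemand v hv hd).demand u =
      I.demand u - if u = v then I.cap else 0 := by
    intro u
    by_cases h : u = v <;> simp [decreaseDemand, h]
  simp only [subtreeDemand, hdemand, Finset.sum_sub_distrib, Finset.sum_ite_eq',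
    Finset.mem_filter, Finset.mem_univ, true_and]
  rfl

theorem lowerBound_decreaseDemand :
    (I.decreaseDemand v hv hd).lowerBound = I.lowerBound - 2 * I.pathLen v := by
  have hedge : ∀ w : V,
      2 * I.len w * (⌈(I.decreaseDemand v hv hd).subtreeDemand w / I.cap⌉ : ℝ) =
        2 * I.len w * (⌈I.subtreeDemand w / I.cap⌉ : ℝ) -
          if I.inSubtree w v then 2 * I.len w else 0 := by
    intro w
    rw [subtreeDemand_decreaseDemand]
    split_ifs
    · rw [ceil_sub_div_self I.cap_pos.ne']
      push_cast
      ring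
    · simp
  rw [← sum_ite_inSubtree_eq_two_mul_pathLen, lowerBound, lowerBound, ← Finset.sum_sub_distrib]
  exact Finset.sum_congr rfl fun w _ => hedge w

end TreeCVRP

theorem cvrp_tree_leaf_roundtrip_one_approximate_general
    {V : Type} [Fintype V] (I : TreeCVRP V) (v : V)
    (hv : v ≠ I.root)
    (hd : I.cap ≤ I.demand v) :
    (I.decreaseDemand v hv hd).lowerBound = I.lowerBound - 2 * I.pathLen v ∧
      ∃ t : I.Tour,
        (∀ u, t.crossings u = if u ≠ I.root ∧ I.inSubtree u v then 2 else 0) ∧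
        t.cover = (fun u => if u = v then I.cap else 0) ∧
        t.cost = I.lowerBound - (I.decreaseDemand v hv hd).lowerBound := by
  have hLB := I.lowerBound_decreaseDemand hv hd
  refine ⟨hLB, I.roundTrip hv, fun _ => rfl, rfl, ?_⟩
  rw [I.roundTrip_cost hv, hLB]
  ring

/-- If `v` is a leaf with demand at least `Q`, then decreasing
the demand at `v` by `Q` decreases the traffic lower bound `LB` by exactly
`2·l(P[r,v])`.  Consequently, the single round-trip tour from the depot to `v`
covering `Q` demand at `v` (which crosses exactly the edges on `P[r,v]`, twice
each) has cost exactly the resulting reduction of the lower bound: it is a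
1-approximate tour. -/
theorem cvrp_tree_leaf_roundtrip_one_approximate
    {V : Type} [Fintype V] (I : TreeCVRP V) (v : V)
    (hv : v ≠ I.root) (hleaf : ∀ u, I.parent u ≠ v)
    (hd : I.cap ≤ I.demand v) :
    (I.decreaseDemand v hv hd).lowerBound = I.lowerBound - 2 * I.pathLen v ∧
      ∃ t : I.Tour,
        (∀ u, t.crossings u = if u ≠ I.root ∧ I.inSubtree u v then 2 else 0) ∧
        t.cover = (fun u => if u = v then I.cap else 0) ∧
        t.cost = I.lowerBound - (I.decreaseDemand v hv hd).lowerBound :=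
  cvrp_tree_leaf_roundtrip_one_approximate_general I v hv hd
end
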